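/- Let P be a CPT from finite set X to finite set Y whose rows p_x are probability mass functions, and let P' be the CPT obtained by amalgamating a subset I ⊆ X of conditioning levels into a single level whose row is the unweighted average (1/|I|) Σ_{x∈I} p_x (keeping all other rows unchanged). Then d⁺(P') ≤ d⁺(P). -/

import Mathlib

/-! Total variation distance is convex in each argument, so the averaged row is no farther from
any row than the farthest of the rows it averages; every distance in the amalgamated table is
therefore bounded by a distance in the original one. -/

noncomputable def dV {Z : Type*} [Fintype Z] (p q : Z → ℝ) : ℝ :=
  (1/2) * ∑ z, |p z - q z|

def IsPMF {Z : Type*} [Fintype Z] (p : Z → ℝ) : Prop :=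
  (∀ z, 0 ≤ p z) ∧ ∑ z, p z = 1

noncomputable def diam {X Y : Type*} [Fintype X] [Fintype Y]
    (P : X → Y → ℝ) : ℝ :=
  ⨆ x : X, ⨆ x' : X, dV (P x) (P x')

section TotalVariation

variable {Z : Type*} [Fintype Z]

lemma dV_self (p : Z → ℝ) : dV p p = 0 := by
  simp [dV]

lemma dV_comm (p q : Z → ℝ) : dV p q = dV q p := by
  simp only [dV, abs_sub_comm]

lemma dV_weightedSum_le {ι : Type*} (s : Finset ι) (w : ι → ℝ) (hw₀ : ∀ i ∈ s, 0 ≤ w i)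
    (hw₁ : ∑ i ∈ s, w i = 1) (p : ι → Z → ℝ) (q : Z → ℝ) :
    dV (fun z => ∑ i ∈ s, w i * p i z) q ≤ ∑ i ∈ s, w i * dV (p i) q := by
  have pointwise : ∀ z, |∑ i ∈ s, w i * p i z - q z| ≤ ∑ i ∈ s, w i * |p i z - q z| := fun z =>
    calc |∑ i ∈ s, w i * p i z - q z| = |∑ i ∈ s, w i * (p i z - q z)| := by
          simp only [mul_sub, Finset.sum_sub_distrib, ← Finset.sum_mul, hw₁, one_mul]
      _ ≤ ∑ i ∈ s, |w i * (p i z - q z)| := Finset.abs_sum_le_sum_abs _ _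
      _ = ∑ i ∈ s, w i * |p i z - q z| :=
          Finset.sum_congr rfl fun i hi => by rw [abs_mul, abs_of_nonneg (hw₀ i hi)]
  calc dV (fun z => ∑ i ∈ s, w i * p i z) q
      ≤ (1/2) * ∑ z, ∑ i ∈ s, w i * |p i z - q z| := by
        unfold dV
        gcongr with z
        exact pointwise z
    _ = ∑ i ∈ s, w i * dV (p i) q := by
        simp only [dV, Finset.sum_comm (s := Finset.univ), Finset.mul_sum]
        exact Finset.sum_congr rfl fun i _ => Finset.sum_congr rfl fun z _ => by ring

lemma dV_average_le {ι : Type*} (s : Finset ι) (hs : s.Nonempty) (p : ι → Z → ℝ) (q : Z → ℝ)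
    {c : ℝ} (hc : ∀ i ∈ s, dV (p i) q ≤ c) :
    dV (fun z => (1 / (s.card : ℝ)) * ∑ i ∈ s, p i z) q ≤ c := by
  have hcard : (0 : ℝ) < s.card := by exact_mod_cast hs.card_pos
  have hw₁ : ∑ _i ∈ s, 1 / (s.card : ℝ) = 1 := by
    rw [Finset.sum_const, nsmul_eq_mul]
    field_simp
  simp only [Finset.mul_sum]
  calc dV (fun z => ∑ i ∈ s, 1 / (s.card : ℝ) * p i z) q
      ≤ ∑ i ∈ s, 1 / (s.card : ℝ) * dV (p i) q :=
        dV_weightedSum_le s _ (fun _ _ => by positivity) hw₁ p q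
    _ ≤ ∑ i ∈ s, 1 / (s.card : ℝ) * c := by gcongr with i hi; exact hc i hi
    _ = c := by rw [← Finset.sum_mul, hw₁, one_mul]

end TotalVariation

section Diameter

variable {X Y : Type*} [Fintype X] [Fintype Y]

lemma dV_le_diam (P : X → Y → ℝ) (x x' : X) : dV (P x) (P x') ≤ diam P :=
  (le_ciSup (Set.finite_range _).bddAbove x').trans
    (le_ciSup (f := fun x => ⨆ x', dV (P x) (P x')) (Set.finite_range _).bddAbove x)

lemma diam_nonneg [Nonempty X] (P : X → Y → ℝ) : 0 ≤ diam P := by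
  inhabit X
  simpa [dV_self] using dV_le_diam P default default

lemma diam_le [Nonempty X] (P : X → Y → ℝ) {c : ℝ} (h : ∀ x x', dV (P x) (P x') ≤ c) :
    diam P ≤ c :=
  ciSup_le fun x => ciSup_le fun x' => h x x'

end Diameter

theorem stmt17_general {X Y : Type*} [Fintype X] [Fintype Y] [DecidableEq X]
    (P : X → Y → ℝ)
    (I : Finset X) (hI : I.Nonempty)
    (P' : {x : X // x ∉ I} ⊕ Unit → Y → ℝ)
    (hP'rows : ∀ x : {x : X // x ∉ I}, P' (Sum.inl x) = P x.1)
    (hP'amal : ∀ u : Unit, P' (Sum.inr u) =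
      fun y => (1 / (I.card : ℝ)) * ∑ x ∈ I, P x y) :
    diam P' ≤ diam P := by
  have : Nonempty X := ⟨hI.choose⟩
  have averaged_row_le (q : X) : dV (P' (Sum.inr ())) (P q) ≤ diam P := by
    rw [hP'amal]
    exact dV_average_le I hI P (P q) fun x _ => dV_le_diam P x q
  apply diam_le
  rintro (x | _) (x' | _)
  · rw [hP'rows, hP'rows]; exact dV_le_diam P x x'
  · rw [hP'rows, dV_comm]; exact averaged_row_le x
  · exact hP'rows x' ▸ averaged_row_le x'
  · rw [dV_self]; exact diam_nonneg P

/-- Amalgamating the conditioning levels in `I` into one level whose row is the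
unweighted average of the rows indexed by `I`, keeping the other rows. -/
theorem stmt17 {X Y : Type*} [Fintype X] [Fintype Y] [DecidableEq X]
    (P : X → Y → ℝ) (hP : ∀ x, IsPMF (P x))
    (I : Finset X) (hI : I.Nonempty)
    (P' : {x : X // x ∉ I} ⊕ Unit → Y → ℝ)
    (hP'rows : ∀ x : {x : X // x ∉ I}, P' (Sum.inl x) = P x.1)
    (hP'amal : ∀ u : Unit, P' (Sum.inr u) =
      fun y => (1 / (I.card : ℝ)) * ∑ x ∈ I, P x y) :
    diam P' ≤ diam P :=
  stmt17_general P I hI P' hP'rows hP'amal
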